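/- Let m ≥ 1 and work in ℝ^m with the Euclidean inner product. Let f : ℝ^m → ℝ be differentiable with gradient ∇f Lipschitz continuous with constant L > 0, let g : ℝ^m → ℝ be lower semicontinuous, and set F = f + g with inf F > −∞. Fix an integer τ ≥ 1, β ≥ 0, and a stepsize 0 < η < 1/(L + 2Lτ(1+β)). Let x, y : ℕ → ℝ^m be sequences such that for every k ≥ τ: (i) there is I(k) ⊆ {k−τ, …, k−1} with ŷ^k = y^k − Σ_{h∈I(k)} (y^{h+1} − y^h); (ii) x^{k+1} minimizes u ↦ ⟨∇f(ŷ^k), u − y^k⟩ + (1/(2η))‖u − y^k‖² + g(u) over ℝ^m; (iii) ‖y^{k+1} − y^k‖ ≤ (1+β)·‖x^{k+1} − y^k‖; and (iv) F(y^{k+1}) ≤ F(x^{k+1}). Then F(y^k) converges to a finite limit F*, and every cluster point z of the sequence (y^k) satisfies F(z) = F*. -/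

import Mathlib

open scoped RealInnerProductSpace
open Filter

private lemma sum_shift (A : ℕ → ℝ) (n : ℕ) :
    (∑ j ∈ Finset.range n, ((j : ℝ) + 1) * A (j + 1)) + ∑ j ∈ Finset.range n, A j
      = (∑ j ∈ Finset.range n, ((j : ℝ) + 1) * A j) + n * A n := by
  induction n with
  | zero => simp
  | succ n ih =>
    rw [Finset.sum_range_succ (f := fun j => ((j : ℝ) + 1) * A (j + 1)),
        Finset.sum_range_succ (f := A),
        Finset.sum_range_succ (f := fun j => ((j : ℝ) + 1) * A j)]
    push_cast
    linarith

private lemma inner_gradient {E : Type*} [NormedAddCommGroup E] [InnerProductSpace ℝ E]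
    [CompleteSpace E] (f : E → ℝ) (x v : E) :
    ⟪gradient f x, v⟫ = fderiv ℝ f x v :=
  InnerProductSpace.toDual_symm_apply

private lemma descent_lemma {E : Type*} [NormedAddCommGroup E] [InnerProductSpace ℝ E]
    [CompleteSpace E] (f : E → ℝ) (L : ℝ) (hL : 0 ≤ L) (hf : Differentiable ℝ f)
    (hLip : ∀ u w : E, ‖gradient f u - gradient f w‖ ≤ L * ‖u - w‖) (a b : E) :
    f b ≤ f a + ⟪gradient f a, b - a⟫ + L / 2 * ‖b - a‖ ^ 2 := by
  set v := b - a with hv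
  set φ : ℝ → ℝ := fun t => f (a + t • v) - t * ⟪gradient f a, v⟫ - L / 2 * t ^ 2 * ‖v‖ ^ 2
    with hφ
  have hder : ∀ t : ℝ, HasDerivAt φ
      (fderiv ℝ f (a + t • v) v - ⟪gradient f a, v⟫ - L * t * ‖v‖ ^ 2) t := by
    intro t
    have h1 : HasDerivAt (fun t : ℝ => a + t • v) v t := by
      simpa using ((hasDerivAt_id t).smul_const v).const_add a
    have h2 : HasDerivAt (fun t : ℝ => f (a + t • v)) (fderiv ℝ f (a + t • v) v) t :=
      (hf (a + t • v)).hasFDerivAt.comp_hasDerivAt t h1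
    have h3 : HasDerivAt (fun t : ℝ => t * ⟪gradient f a, v⟫) ⟪gradient f a, v⟫ t := by
      simpa using (hasDerivAt_id t).mul_const (⟪gradient f a, v⟫)
    have h4 : HasDerivAt (fun t : ℝ => L / 2 * t ^ 2 * ‖v‖ ^ 2) (L * t * ‖v‖ ^ 2) t := by
      have h5 := ((hasDerivAt_pow 2 t).const_mul (L / 2)).mul_const (‖v‖ ^ 2)
      refine h5.congr_deriv ?_
      ring
    exact (h2.sub h3).sub h4
  have hmono : AntitoneOn φ (Set.Icc (0 : ℝ) 1) := by
    apply antitoneOn_of_deriv_nonpos (convex_Icc 0 1)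
    · exact fun t _ => (hder t).continuousAt.continuousWithinAt
    · exact fun t _ => (hder t).differentiableAt.differentiableWithinAt
    · intro t ht
      rw [interior_Icc] at ht
      rw [(hder t).deriv]
      have e1 : fderiv ℝ f (a + t • v) v - ⟪gradient f a, v⟫
          = ⟪gradient f (a + t • v) - gradient f a, v⟫ := by
        rw [inner_sub_left, inner_gradient, inner_gradient]
      have hle : fderiv ℝ f (a + t • v) v - ⟪gradient f a, v⟫ ≤ L * t * ‖v‖ ^ 2 := by
        rw [e1]
        calc ⟪gradient f (a + t • v) - gradient f a, v⟫
            ≤ ‖gradient f (a + t • v) - gradient f a‖ * ‖v‖ := real_inner_le_norm _ _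
          _ ≤ (L * ‖a + t • v - a‖) * ‖v‖ :=
              mul_le_mul_of_nonneg_right (hLip _ _) (norm_nonneg v)
          _ = L * t * ‖v‖ ^ 2 := by
              rw [add_sub_cancel_left, norm_smul, Real.norm_eq_abs, abs_of_pos ht.1]
              ring
      linarith
  have h01 := hmono (Set.mem_Icc.mpr ⟨le_refl 0, zero_le_one⟩)
    (Set.mem_Icc.mpr ⟨zero_le_one, le_refl 1⟩) zero_le_one
  have e0 : φ 0 = f a := by simp [hφ]
  have e1 : φ 1 = f b - ⟪gradient f a, v⟫ - L / 2 * ‖v‖ ^ 2 := by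
    simp [hφ, hv]
  rw [e0, e1] at h01
  linarith


set_option maxHeartbeats 800000 in
/-- Deterministic form of part 2 of Theorem 1: the function values of the AAPCD
iterates converge, and `F` equals that limit at every cluster point of `(y^k)`. -/
theorem stmt_17 (m : ℕ) (hm : 1 ≤ m)
    (f : EuclideanSpace ℝ (Fin m) → ℝ) (L : ℝ) (hL : 0 < L)
    (hf : Differentiable ℝ f)
    (hLip : ∀ u w : EuclideanSpace ℝ (Fin m),
      ‖gradient f u - gradient f w‖ ≤ L * ‖u - w‖)
    (g : EuclideanSpace ℝ (Fin m) → ℝ) (hg : LowerSemicontinuous g)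
    (F : EuclideanSpace ℝ (Fin m) → ℝ) (hF : ∀ u, F u = f u + g u)
    (hbdd : ∃ B : ℝ, ∀ u, B ≤ F u)
    (τ : ℕ) (hτ : 1 ≤ τ) (β : ℝ) (hβ : 0 ≤ β)
    (η : ℝ) (hη0 : 0 < η) (hη1 : η < 1 / (L + 2 * L * τ * (1 + β)))
    (x y : ℕ → EuclideanSpace ℝ (Fin m))
    (hstep : ∀ k, τ ≤ k → ∃ I : Finset ℕ, (∀ h ∈ I, k - τ ≤ h ∧ h ≤ k - 1) ∧
      ∀ u : EuclideanSpace ℝ (Fin m),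
        ⟪gradient f (y k - ∑ h ∈ I, (y (h + 1) - y h)), x (k + 1) - y k⟫ +
            (1 / (2 * η)) * ‖x (k + 1) - y k‖ ^ 2 + g (x (k + 1)) ≤
          ⟪gradient f (y k - ∑ h ∈ I, (y (h + 1) - y h)), u - y k⟫ +
            (1 / (2 * η)) * ‖u - y k‖ ^ 2 + g u)
    (hmom : ∀ k, τ ≤ k → ‖y (k + 1) - y k‖ ≤ (1 + β) * ‖x (k + 1) - y k‖)
    (haccept : ∀ k, τ ≤ k → F (y (k + 1)) ≤ F (x (k + 1))) :
    ∃ Fstar : ℝ, Tendsto (fun k : ℕ => F (y k)) atTop (nhds Fstar) ∧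
      ∀ z : EuclideanSpace ℝ (Fin m),
        (∃ φ : ℕ → ℕ, StrictMono φ ∧ Tendsto (fun t => y (φ t)) atTop (nhds z)) →
        F z = Fstar := by
  classical
  obtain ⟨B, hB⟩ := hbdd
  have hstep' : ∀ k, ∃ I : Finset ℕ, τ ≤ k →
      ((∀ h ∈ I, k - τ ≤ h ∧ h ≤ k - 1) ∧
        ∀ u : EuclideanSpace ℝ (Fin m),
          ⟪gradient f (y k - ∑ h ∈ I, (y (h + 1) - y h)), x (k + 1) - y k⟫ +
              (1 / (2 * η)) * ‖x (k + 1) - y k‖ ^ 2 + g (x (k + 1)) ≤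
            ⟪gradient f (y k - ∑ h ∈ I, (y (h + 1) - y h)), u - y k⟫ +
              (1 / (2 * η)) * ‖u - y k‖ ^ 2 + g u) := by
    intro k
    by_cases hk : τ ≤ k
    · obtain ⟨I, hI1, hI2⟩ := hstep k hk
      exact ⟨I, fun _ => ⟨hI1, hI2⟩⟩
    · exact ⟨∅, fun h => absurd h hk⟩
  choose I hI using hstep'
  set Yhat : ℕ → EuclideanSpace ℝ (Fin m) :=
    fun k => y k - ∑ h ∈ I k, (y (h + 1) - y h) with hYhat
  have hImin : ∀ k, τ ≤ k → ∀ u : EuclideanSpace ℝ (Fin m),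
      ⟪gradient f (Yhat k), x (k + 1) - y k⟫ +
          (1 / (2 * η)) * ‖x (k + 1) - y k‖ ^ 2 + g (x (k + 1)) ≤
        ⟪gradient f (Yhat k), u - y k⟫ + (1 / (2 * η)) * ‖u - y k‖ ^ 2 + g u := by
    intro k hk u
    simpa only [hYhat] using (hI k hk).2 u
  set c : ℝ := L / (2 * (1 + β)) with hc
  set W : ℕ → ℝ :=
    fun k => c * ∑ j ∈ Finset.range τ, ((j : ℝ) + 1) * ‖y (k - τ + j + 1) - y (k - τ + j)‖ ^ 2
    with hW
  set V : ℕ → ℝ := fun k => F (y k) + W k with hV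
  set ε : ℝ := 1 / (2 * η) - L / 2 - L * τ * (1 + β) with hε
  have hβ1 : (0 : ℝ) < 1 + β := by linarith
  have hτ1 : (1 : ℝ) ≤ (τ : ℝ) := by exact_mod_cast hτ
  have hcpos : 0 < c := by rw [hc]; positivity
  have hτpos : (0 : ℝ) < (τ : ℝ) := lt_of_lt_of_le one_pos hτ1
  have hden : (0 : ℝ) < L + 2 * L * τ * (1 + β) := by
    have h := mul_pos (mul_pos (mul_pos two_pos hL) hτpos) hβ1
    nlinarith
  have hηinv : L + 2 * L * τ * (1 + β) < 1 / η := by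
    rw [lt_div_iff₀ hη0]
    have := (lt_div_iff₀ hden).mp hη1
    linarith
  have h2η : 1 / (2 * η) = (1 / η) / 2 := by
    field_simp
  have hεpos : 0 < ε := by rw [hε, h2η]; linarith
  -- bound on ‖y k - Yhat k‖
  have hIb : ∀ k, τ ≤ k →
      ‖y k - Yhat k‖ ≤ ∑ j ∈ Finset.range τ, ‖y (k - τ + j + 1) - y (k - τ + j)‖ := by
    intro k hk
    have h1 : y k - Yhat k = ∑ h ∈ I k, (y (h + 1) - y h) := by
      simp only [hYhat]; exact sub_sub_cancel _ _
    rw [h1]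
    calc ‖∑ h ∈ I k, (y (h + 1) - y h)‖ ≤ ∑ h ∈ I k, ‖y (h + 1) - y h‖ := norm_sum_le _ _
      _ ≤ ∑ h ∈ (Finset.range τ).image (fun j => k - τ + j), ‖y (h + 1) - y h‖ := by
          apply Finset.sum_le_sum_of_subset_of_nonneg
          · intro h hh
            obtain ⟨hh1, hh2⟩ := (hI k hk).1 h hh
            simp only [Finset.mem_image, Finset.mem_range]
            exact ⟨h - (k - τ), by omega, by omega⟩
          · exact fun _ _ _ => norm_nonneg _
      _ = ∑ j ∈ Finset.range τ, ‖y (k - τ + j + 1) - y (k - τ + j)‖ := by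
          rw [Finset.sum_image]
          intro a _ b _ hab
          simp only at hab
          omega
  -- key one-step inequality
  have hkey : ∀ k, τ ≤ k → F (y (k + 1)) ≤ F (y k)
      + c * (∑ j ∈ Finset.range τ, ‖y (k - τ + j + 1) - y (k - τ + j)‖ ^ 2)
      + (L / 2 + L * τ * (1 + β) / 2 - 1 / (2 * η)) * ‖x (k + 1) - y k‖ ^ 2 := by
    intro k hk
    have h1 : ⟪gradient f (Yhat k), x (k + 1) - y k⟫ +
        (1 / (2 * η)) * ‖x (k + 1) - y k‖ ^ 2 + g (x (k + 1)) ≤ g (y k) := by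
      simpa using hImin k hk (y k)
    have h2 : f (x (k + 1)) ≤ f (y k) + ⟪gradient f (y k), x (k + 1) - y k⟫
        + L / 2 * ‖x (k + 1) - y k‖ ^ 2 :=
      descent_lemma f L hL.le hf hLip (y k) (x (k + 1))
    have h4 : ⟪gradient f (y k), x (k + 1) - y k⟫ - ⟪gradient f (Yhat k), x (k + 1) - y k⟫
        ≤ (L * ∑ j ∈ Finset.range τ, ‖y (k - τ + j + 1) - y (k - τ + j)‖)
            * ‖x (k + 1) - y k‖ := by
      rw [← inner_sub_left]
      calc ⟪gradient f (y k) - gradient f (Yhat k), x (k + 1) - y k⟫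
          ≤ ‖gradient f (y k) - gradient f (Yhat k)‖ * ‖x (k + 1) - y k‖ :=
            real_inner_le_norm _ _
        _ ≤ (L * ∑ j ∈ Finset.range τ, ‖y (k - τ + j + 1) - y (k - τ + j)‖)
              * ‖x (k + 1) - y k‖ := by
            apply mul_le_mul_of_nonneg_right _ (norm_nonneg _)
            calc ‖gradient f (y k) - gradient f (Yhat k)‖ ≤ L * ‖y k - Yhat k‖ := hLip _ _
              _ ≤ L * ∑ j ∈ Finset.range τ, ‖y (k - τ + j + 1) - y (k - τ + j)‖ :=
                  mul_le_mul_of_nonneg_left (hIb k hk) hL.le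
    have young : ∀ a b : ℝ, L * a * b ≤ c * a ^ 2 + L * (1 + β) / 2 * b ^ 2 := by
      intro a b
      have hkey2 : c * (a - (1 + β) * b) ^ 2
          = c * a ^ 2 + L * (1 + β) / 2 * b ^ 2 - L * a * b := by
        rw [hc]
        field_simp
        ring
      have hnn := mul_nonneg hcpos.le (sq_nonneg (a - (1 + β) * b))
      linarith
    have h5 : (L * ∑ j ∈ Finset.range τ, ‖y (k - τ + j + 1) - y (k - τ + j)‖)
          * ‖x (k + 1) - y k‖
        ≤ c * (∑ j ∈ Finset.range τ, ‖y (k - τ + j + 1) - y (k - τ + j)‖ ^ 2)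
          + L * τ * (1 + β) / 2 * ‖x (k + 1) - y k‖ ^ 2 := by
      calc (L * ∑ j ∈ Finset.range τ, ‖y (k - τ + j + 1) - y (k - τ + j)‖)
            * ‖x (k + 1) - y k‖
          = ∑ j ∈ Finset.range τ,
              L * ‖y (k - τ + j + 1) - y (k - τ + j)‖ * ‖x (k + 1) - y k‖ := by
            rw [Finset.mul_sum, Finset.sum_mul]
        _ ≤ ∑ j ∈ Finset.range τ,
              (c * ‖y (k - τ + j + 1) - y (k - τ + j)‖ ^ 2
                + L * (1 + β) / 2 * ‖x (k + 1) - y k‖ ^ 2) :=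
            Finset.sum_le_sum fun j _ => young _ _
        _ = c * (∑ j ∈ Finset.range τ, ‖y (k - τ + j + 1) - y (k - τ + j)‖ ^ 2)
            + L * τ * (1 + β) / 2 * ‖x (k + 1) - y k‖ ^ 2 := by
            rw [Finset.sum_add_distrib, ← Finset.mul_sum, Finset.sum_const,
              Finset.card_range, nsmul_eq_mul]
            ring
    have h6 := haccept k hk
    have hFx := hF (x (k + 1))
    have hFyk := hF (y k)
    linarith
  -- recursion for W
  have hWrec : ∀ k, τ ≤ k → W (k + 1) = W k + c * τ * ‖y (k + 1) - y k‖ ^ 2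
      - c * ∑ j ∈ Finset.range τ, ‖y (k - τ + j + 1) - y (k - τ + j)‖ ^ 2 := by
    intro k hk
    have hs2 := sum_shift (fun i => ‖y (k - τ + i + 1) - y (k - τ + i)‖ ^ 2) τ
    beta_reduce at hs2
    rw [show k - τ + τ = k from by omega] at hs2
    simp only [hW]
    rw [Finset.sum_congr rfl (fun j (_ : j ∈ Finset.range τ) => by
      rw [show k + 1 - τ + j = k - τ + (j + 1) from by omega] :
      ∀ j ∈ Finset.range τ, ((j : ℝ) + 1) * ‖y (k + 1 - τ + j + 1) - y (k + 1 - τ + j)‖ ^ 2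
        = ((j : ℝ) + 1) * ‖y (k - τ + (j + 1) + 1) - y (k - τ + (j + 1))‖ ^ 2)]
    linear_combination c * hs2
  -- momentum bound squared
  have hDb : ∀ k, τ ≤ k →
      ‖y (k + 1) - y k‖ ^ 2 ≤ (1 + β) ^ 2 * ‖x (k + 1) - y k‖ ^ 2 := by
    intro k hk
    have h := hmom k hk
    nlinarith [norm_nonneg (y (k + 1) - y k), norm_nonneg (x (k + 1) - y k)]
  -- Lyapunov decrease
  have hVstep : ∀ k, τ ≤ k → V (k + 1) + ε * ‖x (k + 1) - y k‖ ^ 2 ≤ V k := by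
    intro k hk
    have h1 := hkey k hk
    have h2 := hWrec k hk
    have h3 : c * τ * ‖y (k + 1) - y k‖ ^ 2
        ≤ c * τ * ((1 + β) ^ 2 * ‖x (k + 1) - y k‖ ^ 2) :=
      mul_le_mul_of_nonneg_left (hDb k hk) (by positivity)
    have h4 : c * τ * ((1 + β) ^ 2 * ‖x (k + 1) - y k‖ ^ 2)
        = L * τ * (1 + β) / 2 * ‖x (k + 1) - y k‖ ^ 2 := by
      rw [hc]
      field_simp
    have h5 : (L / 2 + L * τ * (1 + β) / 2 - 1 / (2 * η)) * ‖x (k + 1) - y k‖ ^ 2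
        + L * τ * (1 + β) / 2 * ‖x (k + 1) - y k‖ ^ 2 + ε * ‖x (k + 1) - y k‖ ^ 2 = 0 := by
      rw [hε]
      ring
    simp only [hV]
    rw [h2]
    clear_value c ε W
    linarith
  -- V is bounded below and eventually antitone
  have hWnn : ∀ k, 0 ≤ W k := by
    intro k
    simp only [hW]
    positivity
  have hVlb : ∀ k, B ≤ V k := by
    intro k
    have h1 := hB (y k)
    have h2 := hWnn k
    simp only [hV]
    linarith
  have hanti : Antitone fun n => V (n + τ) := by
    apply antitone_nat_of_succ_le
    intro n
    have h := hVstep (n + τ) (Nat.le_add_left τ n)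
    have hnn : 0 ≤ ε * ‖x (n + τ + 1) - y (n + τ)‖ ^ 2 :=
      mul_nonneg hεpos.le (by positivity)
    calc V (n + 1 + τ) = V (n + τ + 1) := by rw [Nat.add_right_comm]
      _ ≤ V (n + τ) := by linarith
  have hbdd' : BddBelow (Set.range fun n => V (n + τ)) := by
    refine ⟨B, ?_⟩
    rintro _ ⟨n, rfl⟩
    exact hVlb _
  have hVconv := tendsto_atTop_ciInf hanti hbdd'
  set Fstar : ℝ := ⨅ n, V (n + τ) with hFstar
  have hVtend : Tendsto V atTop (nhds Fstar) := by
    rw [← Filter.tendsto_add_atTop_iff_nat τ]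
    exact hVconv
  have hV1tend : Tendsto (fun k => V (k + 1)) atTop (nhds Fstar) :=
    (Filter.tendsto_add_atTop_iff_nat 1).mpr hVtend
  have hdiff0 : Tendsto (fun k => V k - V (k + 1)) atTop (nhds 0) := by
    have := hVtend.sub hV1tend
    simpa using this
  have hS0 : Tendsto (fun k => ‖x (k + 1) - y k‖ ^ 2) atTop (nhds 0) := by
    have hub : ∀ᶠ k in atTop, ε * ‖x (k + 1) - y k‖ ^ 2 ≤ V k - V (k + 1) := by
      filter_upwards [eventually_ge_atTop τ] with k hk
      linarith [hVstep k hk]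
    have h1 : Tendsto (fun k => ε * ‖x (k + 1) - y k‖ ^ 2) atTop (nhds 0) :=
      squeeze_zero' (Eventually.of_forall fun k => mul_nonneg hεpos.le (by positivity))
        hub hdiff0
    have h2 := h1.const_mul ε⁻¹
    rw [mul_zero] at h2
    exact h2.congr fun k => inv_mul_cancel_left₀ hεpos.ne' _
  have hs0 : Tendsto (fun k => ‖x (k + 1) - y k‖) atTop (nhds 0) := by
    have := hS0.sqrt
    simpa [Real.sqrt_sq, norm_nonneg] using this
  have hd0 : Tendsto (fun k => ‖y (k + 1) - y k‖) atTop (nhds 0) := by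
    have hub : ∀ᶠ k in atTop, ‖y (k + 1) - y k‖ ≤ (1 + β) * ‖x (k + 1) - y k‖ := by
      filter_upwards [eventually_ge_atTop τ] with k hk
      exact hmom k hk
    have hg0 : Tendsto (fun k => (1 + β) * ‖x (k + 1) - y k‖) atTop (nhds 0) := by
      have := hs0.const_mul (1 + β)
      simpa using this
    exact squeeze_zero' (Eventually.of_forall fun k => norm_nonneg _) hub hg0
  have hD0 : Tendsto (fun k => ‖y (k + 1) - y k‖ ^ 2) atTop (nhds 0) := by
    have := hd0.pow 2
    simpa using this
  have hcomp : ∀ j : ℕ, Tendsto (fun k => k - τ + j) atTop atTop := by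
    intro j
    apply tendsto_atTop_atTop.mpr
    intro b
    exact ⟨b + τ, fun a ha => by omega⟩
  have hW0 : Tendsto W atTop (nhds 0) := by
    have hsum := tendsto_finset_sum (f := fun (j : ℕ) (k : ℕ) =>
        ((j : ℝ) + 1) * ‖y (k - τ + j + 1) - y (k - τ + j)‖ ^ 2) (a := fun _ => (0:ℝ))
        (Finset.range τ) (fun j _ => by
          have := (hD0.comp (hcomp j)).const_mul ((j : ℝ) + 1)
          simpa [Function.comp] using this)
    have := hsum.const_mul c
    simp only [Finset.sum_const_zero, mul_zero] at this
    exact this.congr fun k => by simp only [hW]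
  have hFtend : Tendsto (fun k => F (y k)) atTop (nhds Fstar) := by
    have := hVtend.sub hW0
    rw [sub_zero] at this
    refine this.congr fun k => ?_
    simp only [hV]
    ring
  refine ⟨Fstar, hFtend, ?_⟩
  rintro z ⟨φ, hφ, hyz⟩
  have hφtop : Tendsto φ atTop atTop := hφ.tendsto_atTop
  have hFyφ : Tendsto (fun t => F (y (φ t))) atTop (nhds Fstar) := by
    have := hFtend.comp hφtop
    simpa [Function.comp_def] using this
  -- (a) F z ≤ Fstar by lower semicontinuity
  have hle1 : F z ≤ Fstar := by
    apply le_of_forall_pos_le_add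
    intro ε' hε'
    have hgev : ∀ᶠ t in atTop, g z - ε' / 2 < g (y (φ t)) :=
      hyz.eventually (hg z (g z - ε' / 2) (by linarith))
    have hft : Tendsto (fun t => f (y (φ t))) atTop (nhds (f z)) :=
      (hf.continuous.tendsto z).comp hyz
    have hfev : ∀ᶠ t in atTop, f z - ε' / 2 < f (y (φ t)) :=
      hft.eventually (eventually_gt_nhds (by linarith))
    have hFev : ∀ᶠ t in atTop, F z - ε' ≤ F (y (φ t)) := by
      filter_upwards [hgev, hfev] with t h1 h2
      rw [hF z, hF (y (φ t))]
      linarith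
    have := ge_of_tendsto hFyφ hFev
    linarith
  -- (b) Fstar ≤ F z via the minimizing property at u = z
  have hYhat0 : Tendsto (fun k => Yhat k - y k) atTop (nhds 0) := by
    rw [tendsto_zero_iff_norm_tendsto_zero]
    have hub : ∀ᶠ k in atTop,
        ‖Yhat k - y k‖ ≤ ∑ j ∈ Finset.range τ, ‖y (k - τ + j + 1) - y (k - τ + j)‖ := by
      filter_upwards [eventually_ge_atTop τ] with k hk
      calc ‖Yhat k - y k‖ = ‖y k - Yhat k‖ := norm_sub_rev _ _
        _ ≤ ∑ j ∈ Finset.range τ, ‖y (k - τ + j + 1) - y (k - τ + j)‖ := hIb k hk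
    have hg0 : Tendsto (fun k => ∑ j ∈ Finset.range τ,
        ‖y (k - τ + j + 1) - y (k - τ + j)‖) atTop (nhds 0) := by
      have := tendsto_finset_sum (f := fun (j : ℕ) (k : ℕ) =>
          ‖y (k - τ + j + 1) - y (k - τ + j)‖) (a := fun _ => (0:ℝ))
          (Finset.range τ) (fun j _ => by
            have := hd0.comp (hcomp j)
            simpa [Function.comp_def] using this)
      simpa using this
    exact squeeze_zero' (Eventually.of_forall fun k => norm_nonneg _) hub hg0
  have hYhatφ : Tendsto (fun t => Yhat (φ t)) atTop (nhds z) := by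
    have h0 : Tendsto (fun t => Yhat (φ t) - y (φ t)) atTop (nhds 0) := by
      have := hYhat0.comp hφtop
      simpa [Function.comp_def] using this
    have h1 := h0.add hyz
    rw [zero_add] at h1
    exact h1.congr fun t => by abel
  have hGcont : Continuous (gradient f) := by
    apply (LipschitzWith.of_dist_le_mul (K := L.toNNReal) ?_).continuous
    intro u w
    rw [dist_eq_norm, dist_eq_norm, Real.coe_toNNReal L hL.le]
    exact hLip u w
  have hG : Tendsto (fun t => gradient f (Yhat (φ t))) atTop (nhds (gradient f z)) :=
    (hGcont.tendsto z).comp hYhatφ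
  have hzy : Tendsto (fun t => z - y (φ t)) atTop (nhds 0) := by
    have := hyz.const_sub z
    simpa using this
  have hxy : Tendsto (fun t => x (φ t + 1) - y (φ t)) atTop (nhds 0) := by
    rw [tendsto_zero_iff_norm_tendsto_zero]
    have := hs0.comp hφtop
    simpa [Function.comp_def] using this
  have hxφ : Tendsto (fun t => x (φ t + 1)) atTop (nhds z) := by
    have h1 := hxy.add hyz
    rw [zero_add] at h1
    exact h1.congr fun t => by abel
  have hfx : Tendsto (fun t => f (x (φ t + 1))) atTop (nhds (f z)) :=
    (hf.continuous.tendsto z).comp hxφ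
  have hi1 : Tendsto (fun t => ⟪gradient f (Yhat (φ t)), z - y (φ t)⟫) atTop (nhds 0) := by
    have := Filter.Tendsto.inner (𝕜 := ℝ) hG hzy
    simpa using this
  have hi2 : Tendsto (fun t => ⟪gradient f (Yhat (φ t)), x (φ t + 1) - y (φ t)⟫)
      atTop (nhds 0) := by
    have := Filter.Tendsto.inner (𝕜 := ℝ) hG hxy
    simpa using this
  have hn1 : Tendsto (fun t => 1 / (2 * η) * ‖z - y (φ t)‖ ^ 2) atTop (nhds 0) := by
    have := (hzy.norm.pow 2).const_mul (1 / (2 * η))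
    simpa using this
  have hn2 : Tendsto (fun t => 1 / (2 * η) * ‖x (φ t + 1) - y (φ t)‖ ^ 2)
      atTop (nhds 0) := by
    have := (hxy.norm.pow 2).const_mul (1 / (2 * η))
    simpa using this
  have hΦ : Tendsto (fun t => f (x (φ t + 1)) + ⟪gradient f (Yhat (φ t)), z - y (φ t)⟫
      - ⟪gradient f (Yhat (φ t)), x (φ t + 1) - y (φ t)⟫
      + 1 / (2 * η) * ‖z - y (φ t)‖ ^ 2
      - 1 / (2 * η) * ‖x (φ t + 1) - y (φ t)‖ ^ 2 + g z) atTop (nhds (F z)) := by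
    have h1 := ((((hfx.add hi1).sub hi2).add hn1).sub hn2).add
      (tendsto_const_nhds : Tendsto (fun _ : ℕ => g z) atTop (nhds (g z)))
    rw [hF z]
    simpa using h1
  have hFy1 : Tendsto (fun t => F (y (φ t + 1))) atTop (nhds Fstar) := by
    have h1 : Tendsto (fun t => φ t + 1) atTop atTop :=
      (Filter.tendsto_add_atTop_nat 1).comp hφtop
    have := hFtend.comp h1
    simpa [Function.comp_def] using this
  have hle2 : Fstar ≤ F z := by
    apply le_of_tendsto_of_tendsto hFy1 hΦ
    filter_upwards [eventually_ge_atTop τ] with t ht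
    have hk : τ ≤ φ t := le_trans ht hφ.le_apply
    have hmin := hImin (φ t) hk z
    have hFa := haccept (φ t) hk
    rw [hF (x (φ t + 1))] at hFa
    linarith
  exact le_antisymm hle1 hle2
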